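/- If e_γ ≡_d e_τ for γ, τ ∈ Π_d, then e_γ↑ ≡_{d+1} e_τ↑; that is, the induction operation ↑ is well-defined on congruence classes of noncommutative elementary symmetric functions. -/

import Mathlib

open Finset

attribute [local instance] Classical.propDecidable

/-- Homogeneous degree-`d` noncommutative symmetric functions, viewed as
coefficient functions on words of length `d` in the variables. -/
abbrev NCF (d : ℕ) := (Fin d → ℕ) → ℚ

/-- A coloring is proper for the edge family `ends` if the endpoints of every
edge receive distinct colors. -/
def Proper {d : ℕ} {ε : Type*} {C : Type*} (ends : ε → Sym2 (Fin d)) (w : Fin d → C) : Prop :=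
  ∀ (e : ε) (i j : Fin d), ends e = s(i, j) → w i ≠ w j

/-- The noncommutative chromatic symmetric function `Y_G`. -/
noncomputable def Y {d : ℕ} {ε : Type*} (ends : ε → Sym2 (Fin d)) : NCF d :=
  fun w => if Proper ends w then 1 else 0

/-- Noncommutative monomial symmetric function indexed by a set partition. -/
noncomputable def mFun {d : ℕ} (π : Setoid (Fin d)) : NCF d :=
  fun w => if (∀ i j, w i = w j ↔ π i j) then 1 else 0

/-- Noncommutative power sum symmetric function indexed by a set partition. -/
noncomputable def pFun {d : ℕ} (π : Setoid (Fin d)) : NCF d :=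
  fun w => if (∀ i j, π i j → w i = w j) then 1 else 0

/-- Noncommutative elementary symmetric function indexed by a set partition. -/
noncomputable def eFun {d : ℕ} (π : Setoid (Fin d)) : NCF d :=
  fun w => if (∀ i j, i ≠ j → π i j → w i ≠ w j) then 1 else 0

noncomputable instance setoidFintype (d : ℕ) : Fintype (Setoid (Fin d)) :=
  Fintype.ofInjective (fun s : Setoid (Fin d) => (s : Fin d → Fin d → Prop))
    (fun s t h => Setoid.ext fun a b => by
      have := congrFun (congrFun h a) b; simpa using this.to_iff)

/-- Position action of a permutation on words/NCFs. -/
noncomputable def act {d : ℕ} (δ : Equiv.Perm (Fin d)) (f : NCF d) : NCF d :=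
  fun w => f (w ∘ δ)

/-- The induction operator `↑`, repeating the last variable. -/
noncomputable def up {n : ℕ} (f : NCF (n + 1)) : NCF (n + 2) :=
  fun w => if w (Fin.last (n + 1)) = w ⟨n, by omega⟩ then f (fun i => w i.castSucc) else 0

/-- Vertex map collapsing the last vertex onto the next-to-last one (for contraction). -/
def collapse {n : ℕ} : Fin (n + 2) → Fin (n + 1) :=
  fun i => if h : (i : ℕ) < n + 1 then ⟨i, h⟩ else ⟨n, by omega⟩

/-- The partition of `[d]` into connected components of the spanning subgraph with edge set `S`. -/
def components {d : ℕ} {ε : Type*} (ends : ε → Sym2 (Fin d)) (S : Finset ε) :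
    Setoid (Fin d) :=
  Relation.EqvGen.setoid (fun i j => ∃ e ∈ S, ends e = s(i, j))

/-- The size of the block of `π` containing `i`. -/
noncomputable def blockCard {n : ℕ} (π : Setoid (Fin n)) (i : Fin n) : ℕ :=
  (Finset.univ.filter (fun j => π i j)).card

/-- The multiset of block sizes (the type `λ(π)`) of a set partition. -/
noncomputable def sizes {n : ℕ} (π : Setoid (Fin n)) : Multiset ℕ :=
  (Finset.univ.image (fun i => Finset.univ.filter (fun j => π i j))).val.map Finset.card

/-- `σ ≡ᵢ τ` : same type and blocks containing `i` of equal size. -/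
def cls {n : ℕ} (i : Fin n) (σ τ : Setoid (Fin n)) : Prop :=
  sizes σ = sizes τ ∧ blockCard σ i = blockCard τ i

/-- Congruence modulo `i` of noncommutative symmetric functions: the amalgamated
coefficients of their `e`-expansions agree on every `≡ᵢ`-class. -/
noncomputable def EquivI {n : ℕ} (i : Fin n) (F G : NCF n) : Prop :=
  ∃ a b : Setoid (Fin n) → ℚ,
    F = ∑ τ : Setoid (Fin n), a τ • eFun τ ∧
    G = ∑ τ : Setoid (Fin n), b τ • eFun τ ∧
    ∀ τ, (∑ σ : Setoid (Fin n), if cls i σ τ then a σ else 0)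
        = ∑ σ : Setoid (Fin n), if cls i σ τ then b σ else 0

/-- `(e)`-positivity with respect to the congruence modulo `i`. -/
noncomputable def EPos {n : ℕ} (i : Fin n) (F : NCF n) : Prop :=
  ∃ a : Setoid (Fin n) → ℚ,
    F = ∑ τ : Setoid (Fin n), a τ • eFun τ ∧
    ∀ τ, 0 ≤ ∑ σ : Setoid (Fin n), if cls i σ τ then a σ else 0

/-- `(e)`-positivity of a labeled graph: for some labeling and some congruence. -/
noncomputable def EPosG {d : ℕ} {ε : Type*} (ends : ε → Sym2 (Fin d)) : Prop :=
  ∃ (δ : Equiv.Perm (Fin d)) (i : Fin d),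
    EPos i (Y (fun e => (ends e).map δ))

/-- Extend a partition of `{0,…,n}` to one of `{0,…,n+m}`: old blocks are kept,
the new elements (indices `≥ n+1`) satisfying `Q` are merged into the block of
the old last element `n`, and the remaining new elements form singletons. -/
def extendB {n : ℕ} (m : ℕ) (π : Setoid (Fin (n + 1))) (Q : ℕ → Prop) :
    Setoid (Fin (n + 1 + m)) where
  r x y := x = y ∨
    (∃ (hx : (x : ℕ) < n + 1) (hy : (y : ℕ) < n + 1), π ⟨x, hx⟩ ⟨y, hy⟩) ∨
    (((∃ hx : (x : ℕ) < n + 1, π ⟨x, hx⟩ (Fin.last n)) ∨ (n + 1 ≤ (x : ℕ) ∧ Q (x : ℕ))) ∧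
     ((∃ hy : (y : ℕ) < n + 1, π ⟨y, hy⟩ (Fin.last n)) ∨ (n + 1 ≤ (y : ℕ) ∧ Q (y : ℕ))))
  iseqv := by
    constructor
    · intro x; exact Or.inl rfl
    · rintro x y (rfl | ⟨hx, hy, h⟩ | ⟨h1, h2⟩)
      · exact Or.inl rfl
      · exact Or.inr (Or.inl ⟨hy, hx, π.symm h⟩)
      · exact Or.inr (Or.inr ⟨h2, h1⟩)
    · rintro x y z (rfl | ⟨hx, hy, h⟩ | ⟨h1, h2⟩) h'
      · exact h'
      · rcases h' with rfl | ⟨hy', hz, h''⟩ | ⟨h1', h2'⟩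
        · exact Or.inr (Or.inl ⟨hx, hy, h⟩)
        · exact Or.inr (Or.inl ⟨hx, hz, π.trans h h''⟩)
        · rcases h1' with ⟨hy', hB⟩ | ⟨hge, _⟩
          · exact Or.inr (Or.inr ⟨Or.inl ⟨hx, π.trans h hB⟩, h2'⟩)
          · omega
      · rcases h' with rfl | ⟨hy', hz, h''⟩ | ⟨h1', h2'⟩
        · exact Or.inr (Or.inr ⟨h1, h2⟩)
        · rcases h2 with ⟨hy2, hB⟩ | ⟨hge, _⟩
          · exact Or.inr (Or.inr ⟨h1, Or.inl ⟨hz, π.trans (π.trans (π.symm h'') hB) (π.refl _)⟩⟩)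
          · omega
        · exact Or.inr (Or.inr ⟨h1, h2'⟩)

/-- `π + (n+1)` : insert the new element `n+1` into the block containing `n`. -/
def addLast {n : ℕ} (π : Setoid (Fin (n + 1))) : Setoid (Fin (n + 2)) :=
  extendB 1 π (fun _ => True)

/-- `π / (n+1)` : add the new element `n+1` as a singleton block. -/
def addSingleton {n : ℕ} (π : Setoid (Fin (n + 1))) : Setoid (Fin (n + 2)) :=
  extendB 1 π (fun _ => False)

/-- `σ / (d+1),…,(d+m)` : add the new elements as one additional block. -/
def addBlock {d : ℕ} (m : ℕ) (σ : Setoid (Fin d)) : Setoid (Fin (d + m)) where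
  r x y := (∃ (hx : (x : ℕ) < d) (hy : (y : ℕ) < d), σ ⟨x, hx⟩ ⟨y, hy⟩) ∨
    (d ≤ (x : ℕ) ∧ d ≤ (y : ℕ))
  iseqv := by
    constructor
    · intro x
      by_cases h : (x : ℕ) < d
      · exact Or.inl ⟨h, h, σ.refl _⟩
      · exact Or.inr ⟨by omega, by omega⟩
    · rintro x y (⟨hx, hy, h⟩ | ⟨hx, hy⟩)
      · exact Or.inl ⟨hy, hx, σ.symm h⟩
      · exact Or.inr ⟨hy, hx⟩
    · rintro x y z (⟨hx, hy, h⟩ | ⟨hx, hy⟩) (⟨hy', hz, h'⟩ | ⟨hy', hz⟩)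
      · exact Or.inl ⟨hx, hz, σ.trans h h'⟩
      · omega
      · omega
      · exact Or.inr ⟨hx, hz⟩

noncomputable instance setoidLFO (d : ℕ) : LocallyFiniteOrder (Setoid (Fin d)) :=
  Fintype.toLocallyFiniteOrder

/-- The Möbius function of the lattice of set partitions, with values in `ℚ`. -/
noncomputable def muS {d : ℕ} (a b : Setoid (Fin d)) : ℚ :=
  IncidenceAlgebra.mu ℚ a b

/-- Falling factorial `⟨m⟩_i = m(m-1)⋯(m-i+1)` as a rational number. -/
def ffact (m i : ℕ) : ℚ := ∏ j ∈ Finset.range i, ((m : ℚ) - j)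

/-- Rising factorial `(b)_i = b(b+1)⋯(b+i-1)` as a rational number. -/
def rfact (b i : ℕ) : ℚ := ∏ j ∈ Finset.range i, ((b : ℚ) + j)

/-- The path `P_{n+1}` with edges `v_i v_{i+1}`. -/
def pathEnds (n : ℕ) : Fin n → Sym2 (Fin (n + 1)) :=
  fun e => s(e.castSucc, e.succ)

/-- The cycle `C_{n+1}` with edges `v_i v_{i+1}` (indices mod `n+1`). -/
def cycleEnds (n : ℕ) : Fin (n + 1) → Sym2 (Fin (n + 1)) :=
  fun i => s(i, i + 1)

/-- The commutative chromatic symmetric function `X_G` in `N` variables. -/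
noncomputable def Xcomm {d : ℕ} {ε : Type*} (ends : ε → Sym2 (Fin d)) (N : ℕ) :
    MvPolynomial (Fin N) ℚ :=
  ∑ κ : Fin d → Fin N, if Proper ends κ then ∏ i, MvPolynomial.X (κ i) else 0

section Orientations

variable {V : Type*} {ε : Type*}

/-- `o` is an orientation of the graph with edge endpoints `ends`. -/
def IsOrient (ends : ε → Sym2 V) (o : ε → V × V) : Prop :=
  ∀ e, s((o e).1, (o e).2) = ends e

/-- An orientation is acyclic when it admits no directed cycle. -/
def Acyclic (o : ε → V × V) : Prop :=
  ∀ v : V, ¬ Relation.TransGen (fun a b => ∃ e, o e = (a, b)) v v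

/-- `v` is a sink: every edge incident to `v` is directed toward `v`. -/
def IsSink (o : ε → V × V) (v : V) : Prop := ∀ e, (o e).1 ≠ v

/-- The set of acyclic orientations with unique sink `v₀`. -/
def Aset (ends : ε → Sym2 V) (v₀ : V) : Set (ε → V × V) :=
  {o | IsOrient ends o ∧ Acyclic o ∧ IsSink o v₀ ∧ ∀ v, IsSink o v → v = v₀}

end Orientations

/-- A circuit: a closed walk `u_0, u_1, …, u_m, u_0` with distinct vertices and
distinct edges. -/
structure Circuit {d : ℕ} {ε : Type*} (ends : ε → Sym2 (Fin d)) where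
  m : ℕ
  v : Fin (m + 1) → Fin d
  f : Fin (m + 1) → ε
  hv : Function.Injective v
  hf : Function.Injective f
  he : ∀ k, ends (f k) = s(v k, v (k + 1))

/-- The broken circuit obtained from a circuit: its edge set with the largest
edge removed. -/
noncomputable def broken {d : ℕ} {ε : Type*} [LinearOrder ε] {ends : ε → Sym2 (Fin d)}
    (C : Circuit ends) : Finset ε :=
  (Finset.univ.image C.f).erase
    ((Finset.univ.image C.f).max'
      ⟨C.f 0, Finset.mem_image_of_mem _ (Finset.mem_univ _)⟩)

/-- `P(α)`: partitions `τ ≤ π+(d+1)` whose blocks can be listed as `B_1,…,B_l`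
with `|B_i| = α_i` and `d+1 ∈ B_1`. -/
def Pset {d : ℕ} (π : Setoid (Fin (d + 1))) (l : ℕ) (α : Fin l → ℕ) :
    Set (Setoid (Fin (d + 2))) :=
  {τ | τ ≤ addLast π ∧ ∃ B : Fin l → Finset (Fin (d + 2)),
    (∀ x y, τ x y ↔ ∃ i, x ∈ B i ∧ y ∈ B i) ∧
    (∀ i j, i ≠ j → Disjoint (B i) (B j)) ∧
    (∀ i, (B i).card = α i) ∧
    ∃ hl : 0 < l, Fin.last (d + 1) ∈ B ⟨0, hl⟩}

/-- `G + K_{m+1}` : attach a complete graph on `{v_{d}, v_{d+1}, …, v_{d+m}}`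
(`m` new vertices) to the last vertex of a graph `G` on `d+1` vertices. -/
def attachEnds {d : ℕ} {ε : Type*} (ends : ε → Sym2 (Fin (d + 1))) (m : ℕ) :
    ε ⊕ {p : Fin (m + 1) × Fin (m + 1) // p.1 < p.2} → Sym2 (Fin (d + 1 + m))
  | Sum.inl e => (ends e).map (fun x : Fin (d + 1) => (⟨(x : ℕ), by omega⟩ : Fin (d + 1 + m)))
  | Sum.inr p => s(⟨d + (p.1.1 : ℕ), by omega⟩, ⟨d + (p.1.2 : ℕ), by omega⟩)

/-- The disjoint union `G ⊎ K_m`, with the clique on the `m` new vertices. -/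
def disjEnds {d : ℕ} {ε : Type*} (ends : ε → Sym2 (Fin d)) (m : ℕ) :
    ε ⊕ {p : Fin m × Fin m // p.1 < p.2} → Sym2 (Fin (d + m))
  | Sum.inl e => (ends e).map (Fin.castAdd m)
  | Sum.inr p => s(Fin.natAdd d p.1.1, Fin.natAdd d p.1.2)

/-!
If `γ ≡_d τ`, matching blocks of equal size gives a permutation `δ` of positions fixing `d` that
carries `γ` to `τ`; extended by `d + 1 ↦ d + 1` it carries `e_γ↑` to `e_τ↑`. A relabelling fixing
`d + 1` reindexes the coefficients of any `e`-expansion within each `≡_{d+1}`-class, so it only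
remains to see that `e_γ↑` has an `e`-expansion at all. It lies in `NCSym`, which the `e_σ` span:
`p_σ = ∑_{ρ ≥ σ} m_ρ` is unitriangular, and expanding a determinant gives
`e_σ = ∑_{g} sgn g [cyc g ≤ σ] p_{cyc g}`, where `cyc g` is the partition into cycles of `g`. The
latter is triangular with diagonal entries `∑_{cyc g = σ} sgn g`, which are nonzero: some
permutation has cycle partition `σ`, and all of them have the same cycle type, hence the same sign.
-/

namespace Equiv.Perm

variable {α : Type*}

theorem sameCycle_setoid_le_iff {g : Perm α} {ρ : Setoid α} :
    SameCycle.setoid g ≤ ρ ↔ ∀ x, ρ x (g x) := by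
  refine ⟨fun h x => h (SameCycle.refl g x).apply_right, fun h => ?_⟩
  rintro x _ ⟨k, rfl⟩
  induction k using Int.induction_on with
  | zero => exact ρ.refl x
  | succ k ih => rw [add_comm, zpow_add, zpow_one, mul_apply]; exact ρ.trans ih (h _)
  | pred k ih =>
    rw [sub_eq_neg_add, zpow_add, zpow_neg_one, mul_apply]
    have := h (g.symm ((g ^ (-(k : ℤ))) x))
    rw [apply_symm_apply] at this
    exact ρ.trans ih (ρ.symm this)

variable [Fintype α] [DecidableEq α]

/-- Both sides are the determinant of the `0/1` matrix of `ρ`: expand it over permutations, and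
note that it has two equal rows unless `ρ = ⊥`. -/
theorem sum_sign_sameCycle_setoid_le {R : Type*} [CommRing R] (ρ : Setoid α) :
    (∑ g : Perm α, if SameCycle.setoid g ≤ ρ then ((sign g : ℤ) : R) else 0)
      = if ρ = ⊥ then 1 else 0 := by
  let A : Matrix α α R := fun x y => if ρ x y then 1 else 0
  have hdet : A.det = ∑ g : Perm α, if SameCycle.setoid g ≤ ρ then ((sign g : ℤ) : R) else 0 := by
    rw [Matrix.det_apply']
    refine Finset.sum_congr rfl fun g _ => ?_
    simp only [A, Finset.prod_boole, sameCycle_setoid_le_iff, Finset.mem_univ, true_implies,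
      mul_ite, mul_one, mul_zero]
    exact if_congr ⟨fun h x => ρ.symm (h x), fun h x => ρ.symm (h x)⟩ rfl rfl
  rw [← hdet]
  split_ifs with hρ
  · subst hρ
    have : A = 1 := by ext x y; simp [A, Matrix.one_apply]
    rw [this, Matrix.det_one]
  · obtain ⟨i, j, hij, hne⟩ : ∃ i j, ρ i j ∧ i ≠ j := by
      by_contra! h
      exact hρ (le_antisymm (fun x y hxy => by simpa [Setoid.bot_def] using h x y hxy) bot_le)
    refine Matrix.det_zero_of_row_eq hne (funext fun y => ?_)
    simp only [A]
    exact if_congr ⟨ρ.trans (ρ.symm hij), ρ.trans hij⟩ rfl rfl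

/-- On each block pick a permutation cycling through it, and let the block of `x` decide which
one moves `x`. -/
theorem exists_sameCycle_setoid_eq (τ : Setoid α) : ∃ g : Perm α, SameCycle.setoid g = τ := by
  choose f hf using fun C : Finset α => C.exists_cycleOn
  let B (x : α) : Finset α := Finset.univ.filter (τ x)
  have mem_B (x : α) : x ∈ B x := by simp [B]
  have B_eq {x y : α} (h : τ x y) : B x = B y := by
    ext z; simp only [B, Finset.mem_filter, Finset.mem_univ, true_and]
    exact ⟨τ.trans (τ.symm h), τ.trans h⟩
  have maps (x : α) : τ x (f (B x) x) := by
    simpa [B] using (hf (B x)).1.1.mapsTo (mem_B x)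
  have inj : Function.Injective fun x => f (B x) x := by
    intro x y hxy
    simp only at hxy
    have hxy' : τ x y := τ.trans (maps x) (by rw [hxy]; exact τ.symm (maps y))
    simp only [B_eq hxy'] at hxy
    exact (f (B y)).injective hxy
  let g := Equiv.ofBijective _ (Finite.injective_iff_bijective.mp inj)
  have hle : SameCycle.setoid g ≤ τ := sameCycle_setoid_le_iff.mpr maps
  have pow_apply (x : α) (k : ℕ) : (g ^ k) x = (f (B x) ^ k) x := by
    induction k with
    | zero => rfl
    | succ k ih =>
      have hk : B ((g ^ k) x) = B x := (B_eq (hle ⟨k, rfl⟩)).symm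
      rw [pow_succ', mul_apply, pow_succ', mul_apply, ← ih]
      exact congrArg (f · _) hk
  refine ⟨g, le_antisymm hle fun x y hxy => ?_⟩
  obtain ⟨k, hk⟩ := (hf (B x)).1.exists_pow_eq' (Set.toFinite _) (mem_B x)
    (by simpa [B] using hxy)
  exact ⟨k, by rw [zpow_natCast, pow_apply, hk]⟩

theorem support_cycleOf_eq_filter_sameCycle {g : Perm α} {x : α} (hx : g x ≠ x) :
    (g.cycleOf x).support = Finset.univ.filter (g.SameCycle x) := by
  ext y; simp [mem_support_cycleOf_iff' hx]

theorem cycleType_eq_map_card_orbits (g : Perm α) :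
    g.cycleType = (((Finset.univ.image fun x => Finset.univ.filter (g.SameCycle x)).filter
      (2 ≤ ·.card)).val.map Finset.card) := by
  have hinj : Set.InjOn support (g.cycleFactorsFinset : Set (Perm α)) := by
    intro c hc c' hc' hcc'
    have hc := (mem_cycleFactorsFinset_iff.mp hc).2
    have hc' := (mem_cycleFactorsFinset_iff.mp hc').2
    ext x
    by_cases hx : x ∈ c.support
    · rw [hc x hx, hc' x (hcc' ▸ hx)]
    · rw [notMem_support.mp hx, notMem_support.mp (hcc' ▸ hx)]
  have himage : g.cycleFactorsFinset.image support =
      (Finset.univ.image fun x => Finset.univ.filter (g.SameCycle x)).filter (2 ≤ ·.card) := by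
    ext C
    simp only [Finset.mem_image, Finset.mem_filter, Finset.mem_univ, true_and]
    constructor
    · rintro ⟨c, hc, rfl⟩
      obtain ⟨x, hx, -⟩ := (mem_cycleFactorsFinset_iff.mp hc).1
      have hxg : x ∈ g.support := mem_cycleFactorsFinset_support_le hc (mem_support.mpr hx)
      have hgx : g x ≠ x := mem_support.mp hxg
      rw [cycle_is_cycleOf (mem_support.mpr hx) hc, support_cycleOf_eq_filter_sameCycle hgx]
      refine ⟨⟨x, rfl⟩, ?_⟩
      rw [← support_cycleOf_eq_filter_sameCycle hgx]
      exact two_le_card_support_cycleOf_iff.mpr hgx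
    · rintro ⟨⟨x, rfl⟩, hcard⟩
      have hx : g x ≠ x := by
        intro hfix
        have : (Finset.univ.filter (g.SameCycle x)).card ≤ 1 := by
          refine Finset.card_le_one.mpr fun a ha b hb => ?_
          simp only [Finset.mem_filter, Finset.mem_univ, true_and] at ha hb
          exact (ha.eq_of_left hfix).symm.trans (hb.eq_of_left hfix)
        omega
      exact ⟨g.cycleOf x, cycleOf_mem_cycleFactorsFinset_iff.mpr (mem_support.mpr hx),
        support_cycleOf_eq_filter_sameCycle hx⟩
  rw [cycleType_def, ← Multiset.map_map, ← Finset.image_val_of_injOn hinj, himage]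

theorem sign_eq_of_sameCycle_setoid_eq {g g' : Perm α}
    (h : SameCycle.setoid g = SameCycle.setoid g') : sign g = sign g' := by
  have hcyc : g.SameCycle = g'.SameCycle := by ext x y; exact Setoid.ext_iff.mp h x y
  rw [sign_of_cycleType, sign_of_cycleType, cycleType_eq_map_card_orbits,
    cycleType_eq_map_card_orbits]
  simp only [hcyc]

theorem sum_sign_sameCycle_setoid_eq_ne_zero (τ : Setoid α) :
    (∑ g : Perm α, if SameCycle.setoid g = τ then ((sign g : ℤ) : ℚ) else 0) ≠ 0 := by
  obtain ⟨g₀, hg₀⟩ := exists_sameCycle_setoid_eq τ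
  have hsign : ∀ g : Perm α, SameCycle.setoid g = τ → sign g = sign g₀ :=
    fun g hg => sign_eq_of_sameCycle_setoid_eq (hg.trans hg₀.symm)
  rw [← Finset.sum_filter, Finset.sum_congr rfl fun g hg => by
    rw [hsign g (Finset.mem_filter.mp hg).2], Finset.sum_const, nsmul_eq_mul]
  refine mul_ne_zero (Nat.cast_ne_zero.mpr (Finset.card_pos.mpr ⟨g₀, ?_⟩).ne')
    (Int.cast_ne_zero.mpr (Units.ne_zero _))
  simpa using hg₀

end Equiv.Perm

theorem Submodule.mem_span_range_of_triangular {ι K M : Type*} [Semiring K] [AddCommMonoid M]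
    [Module K M] {r : ι → ι → Prop} (hr : WellFounded r) (u v : ι → M)
    (h : ∀ i, u i ∈ span K (insert (v i) (u '' {j | r j i}))) (i : ι) :
    u i ∈ span K (Set.range v) := by
  induction i using hr.induction with
  | _ i ih =>
    refine span_le.mpr ?_ (h i)
    rintro _ (rfl | ⟨j, hj, rfl⟩)
    · exact subset_span ⟨i, rfl⟩
    · exact ih j hj

section NCSym

variable {n : ℕ}

theorem eFun_apply (σ : Setoid (Fin n)) (w : Fin n → ℕ) :
    eFun σ w = if σ ⊓ Setoid.ker w = ⊥ then 1 else 0 := by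
  simp only [eFun, eq_bot_iff, Setoid.le_def, Setoid.inf_iff_and, Setoid.ker_def]
  congr 1
  exact propext ⟨fun h x y hxy => by_contra fun hne => h x y hne hxy.1 hxy.2,
    fun h x y hne hxy hw => hne (h ⟨hxy, hw⟩)⟩

theorem pFun_apply (σ : Setoid (Fin n)) (w : Fin n → ℕ) :
    pFun σ w = if σ ≤ Setoid.ker w then 1 else 0 := by
  simp only [pFun, Setoid.le_def, Setoid.ker_def]

theorem mFun_apply (σ : Setoid (Fin n)) (w : Fin n → ℕ) :
    mFun σ w = if Setoid.ker w = σ then 1 else 0 := by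
  simp only [mFun, Setoid.ext_iff, Setoid.ker_def]

open Equiv Equiv.Perm in
theorem eFun_eq_sum_pFun (σ : Setoid (Fin n)) :
    eFun σ = ∑ g : Perm (Fin n),
      (if SameCycle.setoid g ≤ σ then ((sign g : ℤ) : ℚ) else 0) • pFun (SameCycle.setoid g) := by
  ext w
  rw [eFun_apply, ← sum_sign_sameCycle_setoid_le, Finset.sum_apply]
  refine Finset.sum_congr rfl fun g _ => ?_
  simp only [Pi.smul_apply, pFun_apply, smul_eq_mul, mul_ite, mul_one, mul_zero, le_inf_iff]
  by_cases h₁ : SameCycle.setoid g ≤ σ <;> by_cases h₂ : SameCycle.setoid g ≤ Setoid.ker w <;>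
    simp [h₁, h₂]


open Equiv Equiv.Perm in
theorem pFun_mem_span_eFun (σ : Setoid (Fin n)) :
    pFun σ ∈ Submodule.span ℚ (Set.range (eFun (d := n))) := by
  refine Submodule.mem_span_range_of_triangular wellFounded_lt _ _ (fun σ => ?_) σ
  set c : ℚ := ∑ g : Perm (Fin n), if SameCycle.setoid g = σ then ((sign g : ℤ) : ℚ) else 0
  have hsplit : c • pFun σ = eFun σ - ∑ g : Perm (Fin n),
      (if SameCycle.setoid g < σ then ((sign g : ℤ) : ℚ) else 0) • pFun (SameCycle.setoid g) := by
    rw [eq_sub_iff_add_eq, eFun_eq_sum_pFun, Finset.sum_smul, ← Finset.sum_add_distrib]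
    refine Finset.sum_congr rfl fun g _ => ?_
    obtain h | h := eq_or_ne (SameCycle.setoid g) σ
    · simp [h]
    · simp [h, lt_iff_le_and_ne]
  rw [← inv_smul_smul₀ (sum_sign_sameCycle_setoid_eq_ne_zero σ) (pFun σ), hsplit]
  refine Submodule.smul_mem _ _ (Submodule.sub_mem _ (Submodule.subset_span (.inl rfl))
    (Submodule.sum_mem _ fun g _ => ?_))
  split_ifs with h
  · exact Submodule.smul_mem _ _ (Submodule.subset_span (.inr ⟨_, h, rfl⟩))
  · rw [zero_smul]; exact Submodule.zero_mem _

theorem mFun_eq_pFun_sub_sum (σ : Setoid (Fin n)) :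
    mFun σ = pFun σ - ∑ ρ ∈ Finset.univ.filter (σ < ·), mFun ρ := by
  ext w
  simp only [Pi.sub_apply, Finset.sum_apply, mFun_apply, pFun_apply, Finset.sum_ite_eq,
    Finset.mem_filter, Finset.mem_univ, true_and, lt_iff_le_and_ne]
  by_cases h : Setoid.ker w = σ
  · simp [h]
  · simp [h, Ne.symm h]

theorem mFun_mem_span_eFun (σ : Setoid (Fin n)) :
    mFun σ ∈ Submodule.span ℚ (Set.range (eFun (d := n))) := by
  have hp : Submodule.span ℚ (Set.range (pFun (d := n))) ≤
      Submodule.span ℚ (Set.range (eFun (d := n))) :=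
    Submodule.span_le.mpr (Set.range_subset_iff.mpr pFun_mem_span_eFun)
  refine hp (Submodule.mem_span_range_of_triangular wellFounded_gt _ _ (fun σ => ?_) σ)
  rw [mFun_eq_pFun_sub_sum]
  exact Submodule.sub_mem _ (Submodule.subset_span (.inl rfl)) (Submodule.sum_mem _ fun ρ hρ =>
    Submodule.subset_span (.inr ⟨ρ, (Finset.mem_filter.mp hρ).2, rfl⟩))

theorem exists_ker_eq (σ : Setoid (Fin n)) : ∃ w : Fin n → ℕ, Setoid.ker w = σ := by
  obtain ⟨f, hf⟩ := Countable.exists_injective_nat (Quotient σ)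
  refine ⟨f ∘ Quotient.mk σ, Setoid.ext fun x y => ?_⟩
  rw [Setoid.ker_def, Function.comp_apply, Function.comp_apply, hf.eq_iff, Quotient.eq]

/-- Membership in `NCSym`: two words differ by an injective renaming of letters exactly when they
have the same kernel. -/
def IsNCSym (F : NCF n) : Prop :=
  ∀ v w : Fin n → ℕ, Setoid.ker v = Setoid.ker w → F v = F w

theorem IsNCSym.exists_eq_sum_eFun {F : NCF n} (hF : IsNCSym F) :
    ∃ a : Setoid (Fin n) → ℚ, F = ∑ σ, a σ • eFun σ := by
  choose w hw using exists_ker_eq (n := n)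
  have hF_eq : F = ∑ σ, F (w σ) • mFun σ := by
    ext v
    simp only [Finset.sum_apply, Pi.smul_apply, mFun_apply, smul_eq_mul, mul_ite, mul_one,
      mul_zero, Finset.sum_ite_eq, Finset.mem_univ, if_true]
    exact hF _ _ (hw _).symm
  have hmem : F ∈ Submodule.span ℚ (Set.range (eFun (d := n))) := by
    rw [hF_eq]
    exact Submodule.sum_mem _ fun σ _ => Submodule.smul_mem _ _ (mFun_mem_span_eFun σ)
  obtain ⟨a, ha⟩ := (Submodule.mem_span_range_iff_exists_fun ℚ).mp hmem
  exact ⟨a, ha.symm⟩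

end NCSym

theorem Equiv.exists_apply_eq_and_comp_eq {α β κ : Type*} [Fintype α] [Fintype β] [DecidableEq β]
    [DecidableEq κ] {f : α → κ} {g : β → κ}
    (hfg : ∀ c, Fintype.card {x // f x = c} = Fintype.card {y // g y = c}) {a : α} {b : β}
    (hab : f a = g b) : ∃ e : α ≃ β, e a = b ∧ ∀ x, g (e x) = f x := by
  let e₀ := Equiv.ofFiberEquiv fun c => Fintype.equivOfCardEq (hfg c)
  have he₀ : ∀ x, g (e₀ x) = f x := Equiv.ofFiberEquiv_map _
  refine ⟨e₀.trans (swap (e₀ a) b), by simp, fun x => ?_⟩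
  rw [trans_apply, swap_apply_def]
  split_ifs with h₁ h₂
  · rw [← hab, e₀.injective h₁]
  · rw [he₀, hab, ← h₂, he₀]
  · exact he₀ x

section Blocks

variable {n : ℕ}

noncomputable def block (σ : Setoid (Fin n)) (x : Fin n) : Finset (Fin n) :=
  Finset.univ.filter (σ x ·)

noncomputable def blocks (σ : Setoid (Fin n)) : Finset (Finset (Fin n)) :=
  Finset.univ.image (block σ)

@[simp] theorem mem_block {σ : Setoid (Fin n)} {x y : Fin n} : y ∈ block σ x ↔ σ x y := by
  simp [block]

theorem block_mem_blocks (σ : Setoid (Fin n)) (x : Fin n) : block σ x ∈ blocks σ :=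
  Finset.mem_image_of_mem _ (Finset.mem_univ x)

theorem block_eq_block_iff {σ : Setoid (Fin n)} {x y : Fin n} :
    block σ x = block σ y ↔ σ x y := by
  refine ⟨fun h => mem_block.mp (h ▸ mem_block.mpr (σ.refl y)), fun h => ?_⟩
  ext z; simp only [mem_block]; exact ⟨σ.trans (σ.symm h), σ.trans h⟩

theorem sizes_eq_map_card_blocks (σ : Setoid (Fin n)) :
    sizes σ = (blocks σ).val.map Finset.card :=
  rfl

theorem blockCard_eq_card_block (σ : Setoid (Fin n)) (i : Fin n) :
    blockCard σ i = (block σ i).card :=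
  rfl

theorem card_fiber_block {σ : Setoid (Fin n)} {C : Finset (Fin n)} (hC : C ∈ blocks σ) :
    Fintype.card {x // block σ x = C} = C.card := by
  obtain ⟨z, -, rfl⟩ := Finset.mem_image.mp hC
  rw [Fintype.card_subtype]
  congr 1; ext x; simp [block_eq_block_iff, σ.comm']

theorem card_blocks_card_eq (σ : Setoid (Fin n)) (k : ℕ) :
    Fintype.card {C : blocks σ // C.1.card = k} = (sizes σ).count k := by
  rw [sizes_eq_map_card_blocks, Multiset.count_map, Fintype.card_subtype, Finset.univ_eq_attach]
  rw [← Finset.card_map (Function.Embedding.subtype _), Finset.map_filter',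
    Finset.attach_map_val, Finset.card_def, Finset.filter_val]
  congr 1
  refine Multiset.filter_congr fun C hC => ?_
  simpa [eq_comm] using fun _ => hC

theorem block_comap (σ : Setoid (Fin n)) (δ : Equiv.Perm (Fin n)) (x : Fin n) :
    block (σ.comap δ) x = (block σ (δ x)).map δ.symm.toEmbedding := by
  ext y; simp [Setoid.comap_rel]

theorem sizes_comap (σ : Setoid (Fin n)) (δ : Equiv.Perm (Fin n)) :
    sizes (σ.comap δ) = sizes σ := by
  have hinj : Set.InjOn (Finset.map δ.symm.toEmbedding) (blocks σ : Set (Finset (Fin n))) :=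
    (Finset.map_injective _).injOn
  have hblocks : blocks (σ.comap δ) = (blocks σ).image (Finset.map δ.symm.toEmbedding) := by
    simp only [blocks, Finset.image_image]
    ext C
    simp only [Finset.mem_image, Finset.mem_univ, true_and, Function.comp_apply, block_comap]
    exact (δ.surjective.exists (p := fun y => (block σ y).map δ.symm.toEmbedding = C)).symm
  rw [sizes_eq_map_card_blocks, sizes_eq_map_card_blocks, hblocks,
    Finset.image_val_of_injOn hinj, Multiset.map_map]
  exact Multiset.map_congr rfl fun C _ => Finset.card_map _

theorem cls_comap_iff {σ ρ : Setoid (Fin n)} {δ : Equiv.Perm (Fin n)} {i : Fin n}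
    (hδ : δ i = i) : cls i (σ.comap δ) ρ ↔ cls i σ ρ := by
  simp only [cls, sizes_comap, blockCard_eq_card_block, block_comap, Finset.card_map, hδ]

/-- Blocks of equal size are matched first, the two blocks containing `i` with each other; then
the elements of matched blocks are matched. -/
theorem exists_perm_comap_eq_of_cls {γ τ : Setoid (Fin n)} {i : Fin n} (h : cls i γ τ) :
    ∃ δ : Equiv.Perm (Fin n), δ i = i ∧ τ.comap δ = γ := by
  obtain ⟨hsizes, hcard⟩ := h
  obtain ⟨Φ, hΦi, hΦ⟩ := Equiv.exists_apply_eq_and_comp_eq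
    (f := fun C : blocks γ => C.1.card) (g := fun C : blocks τ => C.1.card)
    (fun k => by rw [card_blocks_card_eq, card_blocks_card_eq, hsizes])
    (a := ⟨block γ i, block_mem_blocks γ i⟩) (b := ⟨block τ i, block_mem_blocks τ i⟩) hcard
  have hfiber (D : blocks τ) : Fintype.card {x // Φ ⟨block γ x, block_mem_blocks γ x⟩ = D} =
      Fintype.card {y // (⟨block τ y, block_mem_blocks τ y⟩ : blocks τ) = D} := by
    rw [Fintype.card_congr (Equiv.subtypeEquivRight fun x => by
          rw [← Φ.eq_symm_apply, Subtype.ext_iff]),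
      Fintype.card_congr (Equiv.subtypeEquivRight fun y => Subtype.ext_iff),
      card_fiber_block (Φ.symm D).2, card_fiber_block D.2, ← hΦ, Φ.apply_symm_apply]
  obtain ⟨δ, hδi, hδ⟩ := Equiv.exists_apply_eq_and_comp_eq hfiber (a := i) (b := i) hΦi
  refine ⟨δ, hδi, Setoid.ext fun x y => ?_⟩
  rw [Setoid.comap_rel, ← block_eq_block_iff, ← block_eq_block_iff]
  calc block τ (δ x) = block τ (δ y)
      ↔ (⟨block τ (δ x), block_mem_blocks τ _⟩ : blocks τ) =
          ⟨block τ (δ y), block_mem_blocks τ _⟩ :=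
        Subtype.mk_eq_mk.symm
    _ ↔ block γ x = block γ y := by rw [hδ, hδ, Φ.apply_eq_iff_eq, Subtype.mk.injEq]

end Blocks

theorem Setoid.comap_comap_symm {α β : Type*} (e : α ≃ β) (σ : Setoid α) :
    (σ.comap e.symm).comap e = σ :=
  Setoid.ext fun x y => by simp only [Setoid.comap_rel, Equiv.symm_apply_apply]

section Relabel

variable {n : ℕ}

theorem act_eFun (δ : Equiv.Perm (Fin n)) (σ : Setoid (Fin n)) :
    act δ (eFun σ) = eFun (σ.comap δ.symm) := by
  ext w
  simp only [act, eFun, Setoid.comap_rel, Function.comp_apply]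
  congr 1
  refine propext ⟨fun h x y hxy hσ => ?_, fun h x y hxy hσ => ?_⟩
  · simpa using h (δ.symm x) (δ.symm y) (δ.symm.injective.ne hxy) hσ
  · simpa using h (δ x) (δ y) (δ.injective.ne hxy) (by simpa using hσ)

theorem act_sum_smul (δ : Equiv.Perm (Fin n)) {ι : Type*} (s : Finset ι) (a : ι → ℚ)
    (f : ι → NCF n) : act δ (∑ i ∈ s, a i • f i) = ∑ i ∈ s, a i • act δ (f i) := by
  ext w; simp [act, Finset.sum_apply]

/-- The `e`-coefficients of `act δ F` are those of `F` reindexed by `σ ↦ σ.comap δ.symm`, which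
preserves every `≡ᵢ`-class because `δ` fixes `i`. -/
theorem equivI_act {i : Fin n} {δ : Equiv.Perm (Fin n)} (hδ : δ i = i) {F : NCF n}
    {a : Setoid (Fin n) → ℚ} (hF : F = ∑ σ, a σ • eFun σ) : EquivI i F (act δ F) := by
  let E : Setoid (Fin n) ≃ Setoid (Fin n) :=
    ⟨Setoid.comap δ.symm, Setoid.comap δ, Setoid.comap_comap_symm δ,
      fun σ => by simpa using Setoid.comap_comap_symm δ.symm σ⟩
  have hδ' : δ.symm i = i := by rw [Equiv.symm_apply_eq, hδ]
  refine ⟨a, fun ρ => a (E.symm ρ), hF, ?_, fun τ => ?_⟩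
  · rw [hF, act_sum_smul]
    refine Fintype.sum_equiv E _ _ fun σ => ?_
    dsimp only
    rw [act_eFun, E.symm_apply_apply]
    rfl
  · refine Fintype.sum_equiv E _ _ fun σ => ?_
    dsimp only
    rw [E.symm_apply_apply]
    exact if_congr (cls_comap_iff hδ').symm rfl rfl

end Relabel

section Up

variable {n : ℕ}

theorem isNCSym_eFun (σ : Setoid (Fin n)) : IsNCSym (eFun σ) := fun v w h => by
  rw [eFun_apply, eFun_apply, h]

theorem IsNCSym.up {f : NCF (n + 1)} (hf : IsNCSym f) : IsNCSym (up f) := by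
  intro v w h
  have hker (i j : Fin (n + 2)) : v i = v j ↔ w i = w j := by
    rw [← Setoid.ker_def, ← Setoid.ker_def, h]
  have hcast : Setoid.ker (fun i : Fin (n + 1) => v i.castSucc) =
      Setoid.ker (fun i : Fin (n + 1) => w i.castSucc) :=
    Setoid.ext fun i j => by simp only [Setoid.ker_def]; exact hker _ _
  simp only [_root_.up, hf _ _ hcast]
  exact if_congr (hker _ _) rfl rfl

theorem exists_up_act {δ : Equiv.Perm (Fin (n + 1))} (hδ : δ (Fin.last n) = Fin.last n) :
    ∃ δ' : Equiv.Perm (Fin (n + 2)), δ' (Fin.last (n + 1)) = Fin.last (n + 1) ∧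
      ∀ f : NCF (n + 1), up (act δ f) = act δ' (up f) := by
  let δ' : Equiv.Perm (Fin (n + 2)) := finSuccEquivLast.symm.permCongr δ.optionCongr
  have hδ'_castSucc (i : Fin (n + 1)) : δ' i.castSucc = (δ i).castSucc := by
    simp [δ', Equiv.permCongr_apply]
  have hδ'_last : δ' (Fin.last (n + 1)) = Fin.last (n + 1) := by
    simp [δ', Equiv.permCongr_apply]
  refine ⟨δ', hδ'_last, fun f => ?_⟩
  ext w
  have hn : (⟨n, by omega⟩ : Fin (n + 2)) = (Fin.last n).castSucc := rfl
  simp only [up, act, Function.comp_apply, hn, hδ'_castSucc, hδ'_last, hδ]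
  rfl

end Up

/-- Induction respects the congruence: `e_γ ≡_d e_τ` implies `e_γ↑ ≡_{d+1} e_τ↑`. -/
theorem up_respects_congruence {d : ℕ} (γ τ : Setoid (Fin (d + 1)))
    (h : cls (Fin.last d) γ τ) :
    EquivI (Fin.last (d + 1)) (up (eFun γ)) (up (eFun τ)) := by
  obtain ⟨δ, hδ, rfl⟩ := exists_perm_comap_eq_of_cls h
  obtain ⟨δ', hδ', hup⟩ := exists_up_act hδ
  obtain ⟨a, ha⟩ := (isNCSym_eFun (τ.comap δ)).up.exists_eq_sum_eFun
  have hτ : up (eFun τ) = act δ' (up (eFun (τ.comap δ))) := by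
    rw [← hup, act_eFun, Setoid.comap_comap_symm]
  rw [hτ]
  exact equivI_act hδ' ha
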